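/- The limits of Proposition 3.1 provide solutions of the difference system Ψ(z+1) = v·B̃(z)·Ψ(z) (claim underlying Definition 3.2): let v be an admissible diagonal matrix and s ∈ {1,…,μ}. (i) Suppose z and z+1 both lie outside ℤ^{<0} + Λ, and that both limits R_s(z) := lim_{p→∞} p^{−zI−B_{ss}}·(v_s^{−p}/p!)·(∏^{←}_{m=1}^p v·B̃(m+z))_{s∗} and R_s(z+1) := lim_{p→∞} p^{−(z+1)I−B_{ss}}·(v_s^{−p}/p!)·(∏^{←}_{m=1}^p v·B̃(m+z+1))_{s∗} exist. Then R_s(z+1)·v·B̃(1+z) = v_s·R_s(z). (ii) Suppose z and z+1 both lie outside ℤ^{>0} + Λ, and that both limits C_s(z) := lim_{p→∞} (∏^{←}_{m=−p}^{−1} v·B̃(m+z))_{∗s}·((−v_s)^{−p}/p!)·p^{zI+B_{ss}} and C_s(z+1) := lim_{p→∞} (∏^{←}_{m=−p}^{−1} v·B̃(m+z+1))_{∗s}·((−v_s)^{−p}/p!)·p^{(z+1)I+B_{ss}} exist. Then v·B̃(z)·C_s(z) = −v_s·C_s(z+1). -/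

import Mathlib

/-!
Shifting `z` by one shifts the ordered products by one factor: the positive product for `z + 1`
with `p` factors, followed by `v·B̃(1+z)`, is the positive product for `z` with `p + 1` factors,
and dually `v·B̃(z)` in front of the negative product for `z` gives the one for `z + 1` with
`p + 1` factors. Comparing the normalisations at `p` and `p + 1` (`v_s^{-p}/p!` and the matrix
powers `p^{∓(z I + B_ss)}`, which absorb the extra `p^{∓1}` coming from `z ↦ z + 1`) leaves
`v_s` resp. `-v_s` times a correction `((p+1)/p)·(p/(p+1))^{-zI-B_ss}` resp.
`(p/(p+1))^{zI+B_ss}` that tends to the identity, so the limits satisfy the difference equation.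
-/

noncomputable section

open Filter
open scoped Topology

/-- The `k`-th diagonal block `B_{kk}` of a `μ×μ`-blocked matrix. -/
def diagBlock {μ : ℕ} {n : Fin μ → ℕ}
    (B : Matrix (Σ k : Fin μ, Fin (n k)) (Σ k : Fin μ, Fin (n k)) ℂ) (k : Fin μ) :
    Matrix (Fin (n k)) (Fin (n k)) ℂ :=
  Matrix.of fun a b => B ⟨k, a⟩ ⟨k, b⟩

/-- The `s`-th block row `Y_{s∗}` of a blocked matrix. -/
def blockRow {μ : ℕ} {n : Fin μ → ℕ}
    (Y : Matrix (Σ k : Fin μ, Fin (n k)) (Σ k : Fin μ, Fin (n k)) ℂ) (s : Fin μ) :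
    Matrix (Fin (n s)) (Σ k : Fin μ, Fin (n k)) ℂ :=
  Matrix.of fun a j => Y ⟨s, a⟩ j

/-- The `s`-th block column `Y_{∗s}` of a blocked matrix. -/
def blockCol {μ : ℕ} {n : Fin μ → ℕ}
    (Y : Matrix (Σ k : Fin μ, Fin (n k)) (Σ k : Fin μ, Fin (n k)) ℂ) (s : Fin μ) :
    Matrix (Σ k : Fin μ, Fin (n k)) (Fin (n s)) ℂ :=
  Matrix.of fun i b => Y i ⟨s, b⟩

/-- The diagonal matrix `v = diag(v_1 I_{n_1}, …, v_μ I_{n_μ})`. -/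
def vDiag {μ : ℕ} (n : Fin μ → ℕ) (v : Fin μ → ℂ) :
    Matrix (Σ k : Fin μ, Fin (n k)) (Σ k : Fin μ, Fin (n k)) ℂ :=
  Matrix.diagonal fun i => v i.1

/-- The ordered product `∏^{←}_{m=1}^p v·B̃(m+z) = (v·B̃(p+z))⋯(v·B̃(1+z))`. -/
def prodPos {μ : ℕ} (n : Fin μ → ℕ)
    (Btilde : ℂ → Matrix (Σ k : Fin μ, Fin (n k)) (Σ k : Fin μ, Fin (n k)) ℂ)
    (v : Fin μ → ℂ) (z : ℂ) :
    ℕ → Matrix (Σ k : Fin μ, Fin (n k)) (Σ k : Fin μ, Fin (n k)) ℂ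
  | 0 => 1
  | p + 1 => (vDiag n v * Btilde (((p : ℂ) + 1) + z)) * prodPos n Btilde v z p

/-- The ordered product `∏^{←}_{m=−p}^{−1} v·B̃(m+z) = (v·B̃(−1+z))⋯(v·B̃(−p+z))`. -/
def prodNeg {μ : ℕ} (n : Fin μ → ℕ)
    (Btilde : ℂ → Matrix (Σ k : Fin μ, Fin (n k)) (Σ k : Fin μ, Fin (n k)) ℂ)
    (v : Fin μ → ℂ) (z : ℂ) :
    ℕ → Matrix (Σ k : Fin μ, Fin (n k)) (Σ k : Fin μ, Fin (n k)) ℂ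
  | 0 => 1
  | p + 1 => prodNeg n Btilde v z p * (vDiag n v * Btilde (-((p : ℂ) + 1) + z))

/-- The normalized partial products in the positive direction, whose limit is
`R_s(z)`. -/
def seqPos {μ : ℕ} (n : Fin μ → ℕ)
    (Btilde : ℂ → Matrix (Σ k : Fin μ, Fin (n k)) (Σ k : Fin μ, Fin (n k)) ℂ)
    (B : Matrix (Σ k : Fin μ, Fin (n k)) (Σ k : Fin μ, Fin (n k)) ℂ)
    (v : Fin μ → ℂ) (s : Fin μ) (z : ℂ) (p : ℕ) :
    Matrix (Fin (n s)) (Σ k : Fin μ, Fin (n k)) ℂ :=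
  ((v s ^ p)⁻¹ / (Nat.factorial p : ℂ)) •
    (NormedSpace.exp
        (((Real.log p : ℝ) : ℂ) •
          (-(z • (1 : Matrix (Fin (n s)) (Fin (n s)) ℂ)) - diagBlock B s)) *
      blockRow (prodPos n Btilde v z p) s)

/-- The normalized partial products in the negative direction, whose limit is
`C_s(z)`. -/
def seqNeg {μ : ℕ} (n : Fin μ → ℕ)
    (Btilde : ℂ → Matrix (Σ k : Fin μ, Fin (n k)) (Σ k : Fin μ, Fin (n k)) ℂ)
    (B : Matrix (Σ k : Fin μ, Fin (n k)) (Σ k : Fin μ, Fin (n k)) ℂ)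
    (v : Fin μ → ℂ) (s : Fin μ) (z : ℂ) (p : ℕ) :
    Matrix (Σ k : Fin μ, Fin (n k)) (Fin (n s)) ℂ :=
  (((-v s) ^ p)⁻¹ / (Nat.factorial p : ℂ)) •
    (blockCol (prodNeg n Btilde v z p) s *
      NormedSpace.exp
        (((Real.log p : ℝ) : ℂ) •
          (z • (1 : Matrix (Fin (n s)) (Fin (n s)) ℂ) + diagBlock B s)))

open NormedSpace

section MatrixRpow

variable {m : Type*} [Fintype m] [DecidableEq m]

attribute [local instance] Matrix.linftyOpNormedRing Matrix.linftyOpNormedAlgebra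

def matrixRpow (p : ℝ) (M : Matrix m m ℂ) : Matrix m m ℂ :=
  exp ((Real.log p : ℂ) • M)

theorem matrixRpow_mul {p q : ℝ} (hp : p ≠ 0) (hq : q ≠ 0) (M : Matrix m m ℂ) :
    matrixRpow p M * matrixRpow q M = matrixRpow (p * q) M := by
  rw [matrixRpow, matrixRpow, matrixRpow, Real.log_mul hp hq, Complex.ofReal_add, add_smul,
    Matrix.exp_add_of_commute _ _ (((Commute.refl M).smul_left _).smul_right _)]

theorem matrixRpow_add_smul_one {p : ℝ} (hp : 0 < p) (M : Matrix m m ℂ) (c : ℂ) :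
    matrixRpow p (M + c • 1) = ((p : ℂ) ^ c) • matrixRpow p M := by
  have hscalar : exp (((Real.log p : ℂ) * c) • (1 : Matrix m m ℂ)) = ((p : ℂ) ^ c) • 1 := by
    rw [Complex.cpow_def_of_ne_zero (by exact_mod_cast hp.ne'), ← Complex.ofReal_log hp.le,
      Complex.exp_eq_exp_ℂ, ← Algebra.algebraMap_eq_smul_one, ← Algebra.algebraMap_eq_smul_one]
    exact (algebraMap_exp_comm _).symm
  rw [matrixRpow, matrixRpow, smul_add, smul_smul,
    Matrix.exp_add_of_commute _ _ ((Commute.one_right _).smul_right _), hscalar,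
    mul_smul_comm, mul_one]

theorem tendsto_matrixRpow_one {α : Type*} {l : Filter α} {f : α → ℝ}
    (hf : Tendsto f l (𝓝 1)) (M : Matrix m m ℂ) :
    Tendsto (fun x => matrixRpow (f x) M) l (𝓝 1) := by
  have hlog : Tendsto (fun x => (Real.log (f x) : ℂ) • M) l (𝓝 0) := by
    have := ((Complex.continuous_ofReal.tendsto 0).comp
      (Real.log_one ▸ (Real.continuousAt_log one_ne_zero).tendsto.comp hf)).smul_const M
    simpa using this
  have := hlog.exp
  rw [exp_zero] at this
  exact this

end MatrixRpow

theorem Filter.Tendsto.matrix_mul {α l m n R : Type*} [Fintype m] [TopologicalSpace R]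
    [NonUnitalNonAssocSemiring R] [IsTopologicalSemiring R] {f : Filter α}
    {A : α → Matrix l m R} {B : α → Matrix m n R} {A₀ : Matrix l m R} {B₀ : Matrix m n R}
    (hA : Tendsto A f (𝓝 A₀)) (hB : Tendsto B f (𝓝 B₀)) :
    Tendsto (fun x => A x * B x) f (𝓝 (A₀ * B₀)) := by
  refine tendsto_pi_nhds.2 fun i => tendsto_pi_nhds.2 fun k => ?_
  simp only [Matrix.mul_apply]
  exact tendsto_finsetSum _ fun j _ =>
    (tendsto_pi_nhds.1 (tendsto_pi_nhds.1 hA i) j).mul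
      (tendsto_pi_nhds.1 (tendsto_pi_nhds.1 hB j) k)

section DifferenceSystem

variable {μ : ℕ} {n : Fin μ → ℕ}

theorem blockRow_mul (X Y : Matrix (Σ k : Fin μ, Fin (n k)) (Σ k : Fin μ, Fin (n k)) ℂ)
    (s : Fin μ) : blockRow (X * Y) s = blockRow X s * Y := by
  ext a j
  simp [blockRow, Matrix.mul_apply]

theorem blockCol_mul (X Y : Matrix (Σ k : Fin μ, Fin (n k)) (Σ k : Fin μ, Fin (n k)) ℂ)
    (s : Fin μ) : blockCol (X * Y) s = X * blockCol Y s := by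
  ext i b
  simp [blockCol, Matrix.mul_apply]

variable (Btilde : ℂ → Matrix (Σ k : Fin μ, Fin (n k)) (Σ k : Fin μ, Fin (n k)) ℂ)
  (B : Matrix (Σ k : Fin μ, Fin (n k)) (Σ k : Fin μ, Fin (n k)) ℂ)
  (v : Fin μ → ℂ) (s : Fin μ) (z : ℂ)

theorem prodPos_shift_mul (p : ℕ) :
    prodPos n Btilde v (z + 1) p * (vDiag n v * Btilde (1 + z)) = prodPos n Btilde v z (p + 1) := by
  induction p with
  | zero => simp [prodPos]
  | succ p ih =>
    rw [prodPos, mul_assoc, ih, prodPos]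
    congr 3
    push_cast
    ring

theorem mul_prodNeg_eq_prodNeg_shift (p : ℕ) :
    vDiag n v * Btilde z * prodNeg n Btilde v z p = prodNeg n Btilde v (z + 1) (p + 1) := by
  induction p with
  | zero => simp [prodNeg]
  | succ p ih =>
    rw [prodNeg, ← mul_assoc, ih, prodNeg]
    congr 3
    push_cast
    ring

theorem seqPos_eq (p : ℕ) :
    seqPos n Btilde B v s z p = ((v s ^ p)⁻¹ / p.factorial) •
      (matrixRpow p (-(z • 1) - diagBlock B s) * blockRow (prodPos n Btilde v z p) s) :=
  rfl

theorem seqNeg_eq (p : ℕ) :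
    seqNeg n Btilde B v s z p = (((-v s) ^ p)⁻¹ / p.factorial) •
      (blockCol (prodNeg n Btilde v z p) s * matrixRpow p (z • 1 + diagBlock B s)) :=
  rfl

theorem seqPos_shift_mul {p : ℕ} (hp : 0 < p) (hvs : v s ≠ 0) :
    seqPos n Btilde B v s (z + 1) p * (vDiag n v * Btilde (1 + z)) =
      v s • ((((p : ℂ) + 1) / p) • matrixRpow (p / (p + 1)) (-(z • 1) - diagBlock B s) *
        seqPos n Btilde B v s z (p + 1)) := by
  rw [seqPos_eq, seqPos_eq]
  set M := -(z • 1) - diagBlock B s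
  have hp' : (0 : ℝ) < p := by exact_mod_cast hp
  have hexponent : -((z + 1) • 1) - diagBlock B s = M + (-1 : ℂ) • 1 := by module
  have hsplit : matrixRpow p M = matrixRpow (p / (p + 1)) M * matrixRpow ((p + 1 : ℕ) : ℝ) M := by
    rw [matrixRpow_mul (by positivity) (by positivity)]
    push_cast
    field_simp
  rw [hexponent, matrixRpow_add_smul_one hp', Complex.cpow_neg_one]
  simp only [Matrix.mul_smul, Matrix.smul_mul, smul_smul, Matrix.mul_assoc]
  rw [← blockRow_mul, prodPos_shift_mul, hsplit, Matrix.mul_assoc]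
  congr 1
  have : (p : ℂ) ≠ 0 := by exact_mod_cast hp.ne'
  rw [pow_succ, Nat.factorial_succ]
  push_cast
  field_simp

theorem mul_seqNeg {p : ℕ} (hp : 0 < p) (hvs : v s ≠ 0) :
    vDiag n v * Btilde z * seqNeg n Btilde B v s z p =
      (-v s) • (seqNeg n Btilde B v s (z + 1) (p + 1) *
        matrixRpow (p / (p + 1)) (z • 1 + diagBlock B s)) := by
  rw [seqNeg_eq, seqNeg_eq]
  set N := z • 1 + diagBlock B s
  have hexponent : (z + 1) • 1 + diagBlock B s = N + (1 : ℂ) • 1 := by module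
  have hsplit : matrixRpow p N = matrixRpow ((p + 1 : ℕ) : ℝ) N * matrixRpow (p / (p + 1)) N := by
    rw [matrixRpow_mul (by positivity) (by positivity)]
    push_cast
    field_simp
  rw [hexponent, matrixRpow_add_smul_one (by positivity), Complex.cpow_one]
  simp only [Matrix.mul_smul, Matrix.smul_mul, smul_smul, ← Matrix.mul_assoc]
  rw [← blockCol_mul, mul_prodNeg_eq_prodNeg_shift, hsplit, Matrix.mul_assoc]
  congr 1
  have : (p : ℂ) + 1 ≠ 0 := by exact_mod_cast p.succ_ne_zero
  rw [pow_succ, Nat.factorial_succ]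
  push_cast
  field_simp

theorem limit_seqPos_shift_mul {R R₁ : Matrix (Fin (n s)) (Σ k : Fin μ, Fin (n k)) ℂ}
    (hvs : v s ≠ 0) (hR : Tendsto (seqPos n Btilde B v s z) atTop (𝓝 R))
    (hR₁ : Tendsto (seqPos n Btilde B v s (z + 1)) atTop (𝓝 R₁)) :
    R₁ * (vDiag n v * Btilde (1 + z)) = v s • R := by
  have hcorr : Tendsto (fun p : ℕ => (((p : ℂ) + 1) / p) •
      matrixRpow (p / (p + 1)) (-(z • 1) - diagBlock B s)) atTop (𝓝 1) := by
    simpa using ((tendsto_natCast_div_add_atTop (1 : ℂ)).inv₀ one_ne_zero).smul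
      (tendsto_matrixRpow_one (tendsto_natCast_div_add_atTop (1 : ℝ)) _)
  have hrhs := (hcorr.matrix_mul (hR.comp (tendsto_add_atTop_nat 1))).const_smul (v s)
  rw [Matrix.one_mul] at hrhs
  refine tendsto_nhds_unique ((hR₁.matrix_mul tendsto_const_nhds).congr' ?_) hrhs
  filter_upwards [eventually_gt_atTop 0] with p hp using seqPos_shift_mul Btilde B v s z hp hvs

theorem limit_mul_seqNeg {C C₁ : Matrix (Σ k : Fin μ, Fin (n k)) (Fin (n s)) ℂ}
    (hvs : v s ≠ 0) (hC : Tendsto (seqNeg n Btilde B v s z) atTop (𝓝 C))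
    (hC₁ : Tendsto (seqNeg n Btilde B v s (z + 1)) atTop (𝓝 C₁)) :
    vDiag n v * Btilde z * C = (-v s) • C₁ := by
  have hcorr := tendsto_matrixRpow_one (tendsto_natCast_div_add_atTop (1 : ℝ))
    (z • 1 + diagBlock B s)
  have hrhs := ((hC₁.comp (tendsto_add_atTop_nat 1)).matrix_mul hcorr).const_smul (-v s)
  rw [Matrix.mul_one] at hrhs
  refine tendsto_nhds_unique ((tendsto_const_nhds.matrix_mul hC).congr' ?_) hrhs
  filter_upwards [eventually_gt_atTop 0] with p hp using mul_seqNeg Btilde B v s z hp hvs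

end DifferenceSystem

theorem limits_solve_difference_system_general
    (μ : ℕ) (n : Fin μ → ℕ) (Λ : Finset ℂ)
    (Btilde : ℂ → Matrix (Σ k : Fin μ, Fin (n k)) (Σ k : Fin μ, Fin (n k)) ℂ)
    (B : Matrix (Σ k : Fin μ, Fin (n k)) (Σ k : Fin μ, Fin (n k)) ℂ)
    (v : Fin μ → ℂ) (hv0 : ∀ k, v k ≠ 0)
    (s : Fin μ) (z : ℂ) :
    ((∀ m : ℤ, m < 0 → ∀ lam ∈ Λ, z ≠ (m : ℂ) + lam) →
      (∀ m : ℤ, m < 0 → ∀ lam ∈ Λ, z + 1 ≠ (m : ℂ) + lam) →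
      ∀ Rz Rz1 : Matrix (Fin (n s)) (Σ k : Fin μ, Fin (n k)) ℂ,
        Tendsto (fun p : ℕ => seqPos n Btilde B v s z p) atTop (𝓝 Rz) →
        Tendsto (fun p : ℕ => seqPos n Btilde B v s (z + 1) p) atTop (𝓝 Rz1) →
        Rz1 * (vDiag n v * Btilde (1 + z)) = v s • Rz) ∧
    ((∀ m : ℤ, 0 < m → ∀ lam ∈ Λ, z ≠ (m : ℂ) + lam) →
      (∀ m : ℤ, 0 < m → ∀ lam ∈ Λ, z + 1 ≠ (m : ℂ) + lam) →
      ∀ Cz Cz1 : Matrix (Σ k : Fin μ, Fin (n k)) (Fin (n s)) ℂ,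
        Tendsto (fun p : ℕ => seqNeg n Btilde B v s z p) atTop (𝓝 Cz) →
        Tendsto (fun p : ℕ => seqNeg n Btilde B v s (z + 1) p) atTop (𝓝 Cz1) →
        vDiag n v * Btilde z * Cz = (-(v s)) • Cz1) :=
  ⟨fun _ _ _ _ hR hR₁ => limit_seqPos_shift_mul Btilde B v s z (hv0 s) hR hR₁,
    fun _ _ _ _ hC hC₁ => limit_mul_seqNeg Btilde B v s z (hv0 s) hC hC₁⟩

/-- The limits of Proposition 3.1 solve the difference system
`Ψ(z+1) = v·B̃(z)·Ψ(z)`: (i) `R_s(z+1)·v·B̃(1+z) = v_s·R_s(z)`, and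
(ii) `v·B̃(z)·C_s(z) = −v_s·C_s(z+1)`. -/
theorem limits_solve_difference_system
    (μ : ℕ) (hμ : 1 ≤ μ) (n : Fin μ → ℕ) (Λ : Finset ℂ)
    (Btilde : ℂ → Matrix (Σ k : Fin μ, Fin (n k)) (Σ k : Fin μ, Fin (n k)) ℂ)
    (B : Matrix (Σ k : Fin μ, Fin (n k)) (Σ k : Fin μ, Fin (n k)) ℂ)
    (hrat : ∀ i j : (Σ k : Fin μ, Fin (n k)), ∃ P Q : Polynomial ℂ, Q ≠ 0 ∧
      (∀ z : ℂ, Q.eval z = 0 → z ∈ Λ) ∧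
      ∀ z : ℂ, z ∉ Λ → Btilde z i j = P.eval z / Q.eval z)
    (hlin : Tendsto (fun z : ℂ => z⁻¹ • Btilde z) (Bornology.cobounded ℂ) (𝓝 1))
    (hB : Tendsto (fun z : ℂ => Btilde z - z • 1) (Bornology.cobounded ℂ) (𝓝 B))
    (v : Fin μ → ℂ) (hv : Function.Injective v) (hv0 : ∀ k, v k ≠ 0)
    (s : Fin μ) (z : ℂ) :
    ((∀ m : ℤ, m < 0 → ∀ lam ∈ Λ, z ≠ (m : ℂ) + lam) →
      (∀ m : ℤ, m < 0 → ∀ lam ∈ Λ, z + 1 ≠ (m : ℂ) + lam) →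
      ∀ Rz Rz1 : Matrix (Fin (n s)) (Σ k : Fin μ, Fin (n k)) ℂ,
        Tendsto (fun p : ℕ => seqPos n Btilde B v s z p) atTop (𝓝 Rz) →
        Tendsto (fun p : ℕ => seqPos n Btilde B v s (z + 1) p) atTop (𝓝 Rz1) →
        Rz1 * (vDiag n v * Btilde (1 + z)) = v s • Rz) ∧
    ((∀ m : ℤ, 0 < m → ∀ lam ∈ Λ, z ≠ (m : ℂ) + lam) →
      (∀ m : ℤ, 0 < m → ∀ lam ∈ Λ, z + 1 ≠ (m : ℂ) + lam) →
      ∀ Cz Cz1 : Matrix (Σ k : Fin μ, Fin (n k)) (Fin (n s)) ℂ,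
        Tendsto (fun p : ℕ => seqNeg n Btilde B v s z p) atTop (𝓝 Cz) →
        Tendsto (fun p : ℕ => seqNeg n Btilde B v s (z + 1) p) atTop (𝓝 Cz1) →
        vDiag n v * Btilde z * Cz = (-(v s)) • Cz1) :=
  limits_solve_difference_system_general μ n Λ Btilde B v hv0 s z

end
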